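/- arXiv:2305.00306 — 12 statements merged into one kernel-verified Lean document; each statement's English description precedes it below -/
import Mathlib

section
/- Let ℋ be a nonempty family of nonempty subsets of T, let α be a multifunction, and let M be a nonempty set of multifunctions with M ⊆ N_ℋ(α). Then the pointwise union ⋁_{z∈M} z belongs to N_ℋ(α). -/
open Set

/-- Restriction of a set `F` of functions (elements of `Z`) to the set `A ⊆ T`:
`F|_A = {f|_A : f ∈ F}`. -/
def resSet {T X : Type*} {Z : Set (T → X)} (A : Set T) (F : Set ↥Z) : Set (↥A → X) :=
  (fun h : ↥Z => A.restrict (h : T → X)) '' F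

/-- A multifunction `z : Ω → 𝒫(Z)` is `A`-non-anticipative if `ω|_A = ω'|_A` implies
`z(ω)|_A = z(ω')|_A`. -/
def NonAnt {T X Y : Type*} (Ω : Set (T → Y)) (Z : Set (T → X)) (A : Set T)
    (z : ↥Ω → Set ↥Z) : Prop :=
  ∀ ω ω' : ↥Ω, A.restrict (ω : T → Y) = A.restrict (ω' : T → Y) →
    resSet A (z ω) = resSet A (z ω')

/-- `N_ℋ(α)`: the set of `ℋ`-non-anticipative multiselectors of `α`. -/
def Nna {T X Y : Type*} (Ω : Set (T → Y)) (Z : Set (T → X)) (ℋ : Set (Set T))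
    (α : ↥Ω → Set ↥Z) : Set (↥Ω → Set ↥Z) :=
  {z | (∀ A ∈ ℋ, NonAnt Ω Z A z) ∧ ∀ ω, z ω ⊆ α ω}

/-- `N°_ℋ(α)`: the set of nonempty-valued `ℋ`-non-anticipative multiselectors of `α`. -/
def NnaNE {T X Y : Type*} (Ω : Set (T → Y)) (Z : Set (T → X)) (ℋ : Set (Set T))
    (α : ↥Ω → Set ↥Z) : Set (↥Ω → Set ↥Z) :=
  {z ∈ Nna Ω Z ℋ α | ∀ ω, (z ω).Nonempty}

/-- The operator `Γ_A`:
`Γ_A(α)(ω) = {h ∈ α(ω) : h|_A ∈ ⋂_{ω' ∈ Ω, ω'|_A = ω|_A} α(ω')|_A}`. -/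
def Gamma {T X Y : Type*} (Ω : Set (T → Y)) (Z : Set (T → X)) (A : Set T)
    (α : ↥Ω → Set ↥Z) : ↥Ω → Set ↥Z :=
  fun ω => {h ∈ α ω |
    A.restrict (h : T → X) ∈
      ⋂ ω' ∈ {η : ↥Ω | A.restrict (η : T → Y) = A.restrict (ω : T → Y)}, resSet A (α ω')}

theorem resSet_biUnion {T X ι : Type*} {Z : Set (T → X)} (A : Set T) (s : Set ι)
    (F : ι → Set ↥Z) : resSet A (⋃ i ∈ s, F i) = ⋃ i ∈ s, resSet A (F i) :=
  image_iUnion₂ _ _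

theorem NonAnt.biUnion {T X Y : Type*} {Ω : Set (T → Y)} {Z : Set (T → X)} {A : Set T}
    {M : Set (↥Ω → Set ↥Z)} (hM : ∀ z ∈ M, NonAnt Ω Z A z) :
    NonAnt Ω Z A (fun ω => ⋃ z ∈ M, z ω) := by
  intro ω ω' hωω'
  simp only [resSet_biUnion]
  exact iUnion₂_congr fun z hz => hM z hz ω ω' hωω'

theorem stmt0_general {T X Y : Type*}
    (Ω : Set (T → Y)) (Z : Set (T → X))
    (ℋ : Set (Set T))
    (α : ↥Ω → Set ↥Z) (M : Set (↥Ω → Set ↥Z))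
    (hMsub : M ⊆ Nna Ω Z ℋ α) :
    (fun ω => ⋃ z ∈ M, z ω) ∈ Nna Ω Z ℋ α :=
  ⟨fun A hA => NonAnt.biUnion fun _ hz => (hMsub hz).1 A hA,
    fun ω => iUnion₂_subset fun _ hz => (hMsub hz).2 ω⟩

/-- If `M` is a nonempty set of multifunctions with `M ⊆ N_ℋ(α)`,
then the pointwise union `⋁_{z ∈ M} z` belongs to `N_ℋ(α)`. -/
theorem stmt0 {T X Y : Type*} [Nonempty T] [Nonempty X] [Nonempty Y]
    (Ω : Set (T → Y)) (Z : Set (T → X)) (hΩ : Ω.Nonempty) (hZ : Z.Nonempty)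
    (ℋ : Set (Set T)) (hℋ : ℋ.Nonempty) (hℋmem : ∀ A ∈ ℋ, A.Nonempty)
    (α : ↥Ω → Set ↥Z) (M : Set (↥Ω → Set ↥Z)) (hM : M.Nonempty)
    (hMsub : M ⊆ Nna Ω Z ℋ α) :
    (fun ω => ⋃ z ∈ M, z ω) ∈ Nna Ω Z ℋ α :=
  stmt0_general Ω Z ℋ α M hMsub
end

section
/- Let ℋ be a nonempty family of nonempty subsets of T, let α be a multifunction, and let M be a nonempty set of multifunctions with M ⊆ N_ℋ(α). If for every ω ∈ Ω there exists z ∈ M with z(ω) ≠ ∅, then the pointwise union ⋁_{z∈M} z belongs to N°_ℋ(α), i.e., it is an ℋ-non-anticipative multiselector of α with nonempty values. -/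
open Set

theorem biUnion_mem_Nna {T X Y : Type*} {Ω : Set (T → Y)} {Z : Set (T → X)}
    {ℋ : Set (Set T)} {α : ↥Ω → Set ↥Z} {M : Set (↥Ω → Set ↥Z)} (hM : M ⊆ Nna Ω Z ℋ α) :
    (fun ω => ⋃ z ∈ M, z ω) ∈ Nna Ω Z ℋ α :=
  ⟨fun A hA => NonAnt.biUnion fun _ hz => (hM hz).1 A hA,
    fun ω => iUnion₂_subset fun _ hz => (hM hz).2 ω⟩

theorem stmt1_general {T X Y : Type*} (Ω : Set (T → Y)) (Z : Set (T → X)) (ℋ : Set (Set T))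
    (α : ↥Ω → Set ↥Z) (M : Set (↥Ω → Set ↥Z))
    (hMsub : M ⊆ Nna Ω Z ℋ α)
    (hne : ∀ ω : ↥Ω, ∃ z ∈ M, (z ω).Nonempty) :
    (fun ω => ⋃ z ∈ M, z ω) ∈ NnaNE Ω Z ℋ α := by
  refine ⟨biUnion_mem_Nna hMsub, fun ω => ?_⟩
  obtain ⟨z, hz, h, hh⟩ := hne ω
  exact ⟨h, mem_iUnion₂.2 ⟨z, hz, hh⟩⟩

/-- If `M ⊆ N_ℋ(α)` is nonempty and for every `ω` some `z ∈ M` has `z ω ≠ ∅`,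
then the pointwise union `⋁_{z ∈ M} z` belongs to `N°_ℋ(α)`. -/
theorem stmt1 {T X Y : Type*} [Nonempty T] [Nonempty X] [Nonempty Y]
    (Ω : Set (T → Y)) (Z : Set (T → X)) (hΩ : Ω.Nonempty) (hZ : Z.Nonempty)
    (ℋ : Set (Set T)) (hℋ : ℋ.Nonempty) (hℋmem : ∀ A ∈ ℋ, A.Nonempty)
    (α : ↥Ω → Set ↥Z) (M : Set (↥Ω → Set ↥Z)) (hM : M.Nonempty)
    (hMsub : M ⊆ Nna Ω Z ℋ α)
    (hne : ∀ ω : ↥Ω, ∃ z ∈ M, (z ω).Nonempty) :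
    (fun ω => ⋃ z ∈ M, z ω) ∈ NnaNE Ω Z ℋ α :=
  stmt1_general Ω Z ℋ α M hMsub hne
end

section
/- Let ℋ be a nonempty family of nonempty subsets of T and α a multifunction. Then the pointwise union ⋁_{z ∈ N_ℋ(α)} z belongs to N_ℋ(α) and is the ⊑-greatest element of N_ℋ(α): every z ∈ N_ℋ(α) satisfies z ⊑ ⋁_{z′ ∈ N_ℋ(α)} z′. -/
open Set

theorem stmt2_general {T X Y : Type*} (Ω : Set (T → Y)) (Z : Set (T → X)) (ℋ : Set (Set T))
    (α : ↥Ω → Set ↥Z) :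
    (fun ω => ⋃ z ∈ Nna Ω Z ℋ α, z ω) ∈ Nna Ω Z ℋ α ∧
      ∀ z ∈ Nna Ω Z ℋ α, ∀ ω : ↥Ω, z ω ⊆ ⋃ z' ∈ Nna Ω Z ℋ α, z' ω :=
  ⟨biUnion_mem_Nna subset_rfl, fun z hz ω => subset_iUnion₂ (s := fun z' _ => z' ω) z hz⟩

/-- The pointwise union of all elements of `N_ℋ(α)` belongs to `N_ℋ(α)` and is
its `⊑`-greatest element. -/
theorem stmt2 {T X Y : Type*} [Nonempty T] [Nonempty X] [Nonempty Y]
    (Ω : Set (T → Y)) (Z : Set (T → X)) (hΩ : Ω.Nonempty) (hZ : Z.Nonempty)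
    (ℋ : Set (Set T)) (hℋ : ℋ.Nonempty) (hℋmem : ∀ A ∈ ℋ, A.Nonempty)
    (α : ↥Ω → Set ↥Z) :
    (fun ω => ⋃ z ∈ Nna Ω Z ℋ α, z ω) ∈ Nna Ω Z ℋ α ∧
      ∀ z ∈ Nna Ω Z ℋ α, ∀ ω : ↥Ω, z ω ⊆ ⋃ z' ∈ Nna Ω Z ℋ α, z' ω :=
  stmt2_general Ω Z ℋ α
end

section
/- For any multifunction α and any partition Δ = {t₀ = τ₀ < τ₁ < ⋯ < τ_n = ϑ} of T, the conditions (α, Δ) are feasible if and only if N°_{ℋ_Δ}(α) ≠ ∅, i.e., if and only if α has an ℋ_Δ-non-anticipative multiselector with nonempty values. -/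
open Set

/-- `H_i = [τ₀, τ_i]` (as a subset of `T = [t₀, ϑ]`), for `i = 1, …, n`
(here `i : Fin n` corresponds to the instant `τ (i+1)`). -/
def Hset (t₀ ϑ : ℝ) {n : ℕ} (τ : Fin (n + 1) → ℝ) (i : Fin n) :
    Set ↥(Set.Icc t₀ ϑ) :=
  {t | (t : ℝ) ≤ τ i.succ}

/-- The family `ℋ_Δ = {H_1, …, H_n}`. -/
def HΔ (t₀ ϑ : ℝ) {n : ℕ} (τ : Fin (n + 1) → ℝ) : Set (Set ↥(Set.Icc t₀ ϑ)) :=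
  {S | ∃ i : Fin n, S = Hset t₀ ϑ τ i}

/-- Feasibility of the conditions `(α, Δ)` for the partition
`Δ = {t₀ = τ 0 < τ 1 < ⋯ < τ n = ϑ}`: there is a tuple `φ_1, …, φ_n` of multiselectors of `α`
such that for every `(ω_1,…,ω_n) ∈ Ω_Δ` one has `(φ_1(ω_1),…,φ_n(ω_n)) ∈ Z_Δ`. -/
def Feasible {X Y : Type*} (t₀ ϑ : ℝ) (Ω : Set (↥(Set.Icc t₀ ϑ) → Y))
    (Z : Set (↥(Set.Icc t₀ ϑ) → X)) (α : ↥Ω → Set ↥Z)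
    {n : ℕ} (τ : Fin (n + 1) → ℝ) : Prop :=
  ∃ φ : Fin n → (↥Ω → Set ↥Z),
    (∀ i, ∀ ω, φ i ω ⊆ α ω) ∧
    ∀ ωs : Fin n → ↥Ω,
      (∀ i j : Fin n, (j : ℕ) = (i : ℕ) + 1 →
          (Hset t₀ ϑ τ i).restrict (ωs i).1 = (Hset t₀ ϑ τ i).restrict (ωs j).1) →
      ((∀ i, (φ i (ωs i)).Nonempty) ∧
        ∀ i j : Fin n, (j : ℕ) = (i : ℕ) + 1 →
          resSet (Hset t₀ ϑ τ i) (φ i (ωs i)) = resSet (Hset t₀ ϑ τ i) (φ j (ωs j)))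


section Restriction

variable {T X Y : Type*} {Ω : Set (T → Y)} {Z : Set (T → X)}

theorem resSet_eq_of_subset {A B : Set T} (hAB : A ⊆ B) {F G : Set ↥Z}
    (h : resSet B F = resSet B G) : resSet A F = resSet A G := by
  have hres : ∀ F : Set ↥Z, resSet A F =
      (fun g : ↥B → X => fun a : ↥A => g ⟨a.1, hAB a.2⟩) '' resSet B F := by
    intro F
    rw [resSet, resSet, Set.image_image]
    rfl
  rw [hres F, hres G, h]

theorem resSet_eq_of_le {n : ℕ} {H : Fin n → Set T} (hH : Monotone H) {F : Fin n → Set ↥Z}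
    (hF : ∀ i j : Fin n, (j : ℕ) = i + 1 → resSet (H i) (F i) = resSet (H i) (F j))
    {i j : Fin n} (hij : i ≤ j) : resSet (H i) (F i) = resSet (H i) (F j) := by
  suffices ∀ k (hk : k < n), (i : ℕ) ≤ k → resSet (H i) (F i) = resSet (H i) (F ⟨k, hk⟩) from
    this j j.2 hij
  intro k hk hik
  induction k, hik using Nat.le_induction with
  | base => rfl
  | succ k hik ih =>
    rw [ih (by omega)]
    exact resSet_eq_of_subset (hH hik) (hF ⟨k, by omega⟩ ⟨k + 1, hk⟩ rfl)

theorem nonAnt_univ (z : ↥Ω → Set ↥Z) : NonAnt Ω Z univ z := by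
  intro ω ω' h
  rw [Subtype.ext (funext fun t => congrFun h ⟨t, trivial⟩)]

def splice {β : Type*} {n : ℕ} (i : Fin n) (a b : β) : Fin n → β :=
  fun k => if k ≤ i then a else b

theorem restrict_splice_consecutive {n : ℕ} (H : Fin n → Set T) {i : Fin n} {ω ω' : ↥Ω}
    (h : (H i).domRestrict (ω : T → Y) = (H i).domRestrict (ω' : T → Y)) (a b : Fin n)
    (hab : (b : ℕ) = a + 1) :
    (H a).domRestrict (splice i ω ω' a).1 = (H a).domRestrict (splice i ω ω' b).1 := by
  unfold splice
  by_cases hb : b ≤ i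
  · rw [if_pos (by rw [Fin.le_def] at hb ⊢; omega), if_pos hb]
  · by_cases ha : a ≤ i
    · obtain rfl : a = i := by rw [Fin.le_def] at ha hb; exact Fin.ext (by omega)
      rw [if_pos ha, if_neg hb]
      exact h
    · rw [if_neg ha, if_neg hb]

/-- To compare `φ_last(ω)` and `φ_last(ω')` on `H i`, chain both through `φ_i(ω)`: once along
the constant sequence `ω`, once along the sequence that switches from `ω` to `ω'` right after
index `i`. -/
theorem nonAnt_last_of_consecutive {n : ℕ} {H : Fin (n + 1) → Set T} (hH : Monotone H)
    (hlast : H (Fin.last n) = univ) {φ : Fin (n + 1) → ↥Ω → Set ↥Z}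
    (hφ : ∀ ωs : Fin (n + 1) → ↥Ω,
      (∀ i j : Fin (n + 1), (j : ℕ) = i + 1 →
        (H i).domRestrict (ωs i).1 = (H i).domRestrict (ωs j).1) →
      ∀ i j : Fin (n + 1), (j : ℕ) = i + 1 →
        resSet (H i) (φ i (ωs i)) = resSet (H i) (φ j (ωs j)))
    (i : Fin (n + 1)) : NonAnt Ω Z (H i) (φ (Fin.last n)) := by
  rcases (Fin.le_last i).eq_or_lt with rfl | hi
  · rw [hlast]
    exact nonAnt_univ _
  intro ω ω' hωω'
  have hconst := resSet_eq_of_le hH (hφ (fun _ => ω) fun _ _ _ => rfl) (Fin.le_last i)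
  have hsplice := resSet_eq_of_le hH
    (hφ (splice i ω ω') (restrict_splice_consecutive H hωω')) (Fin.le_last i)
  simp only [splice, le_refl, if_true, if_neg (not_le.mpr hi)] at hsplice
  exact hconst.symm.trans hsplice

end Restriction

theorem hset_monotone (t₀ ϑ : ℝ) {n : ℕ} {τ : Fin (n + 1) → ℝ} (hτ : Monotone τ) :
    Monotone (Hset t₀ ϑ τ) :=
  fun _ _ hij _ ht => ht.trans (hτ (Fin.succ_le_succ_iff.mpr hij))

theorem hset_last_eq_univ {t₀ ϑ : ℝ} {m : ℕ} {τ : Fin (m + 2) → ℝ}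
    (hτn : τ (Fin.last (m + 1)) = ϑ) : Hset t₀ ϑ τ (Fin.last m) = univ := by
  ext t
  simp only [Hset, Fin.succ_last, hτn, mem_univ, iff_true]
  exact t.2.2

theorem feasible_of_mem_nnaNE {X Y : Type*} {t₀ ϑ : ℝ} {Ω : Set (↥(Set.Icc t₀ ϑ) → Y)}
    {Z : Set (↥(Set.Icc t₀ ϑ) → X)} {α : ↥Ω → Set ↥Z} {n : ℕ} {τ : Fin (n + 1) → ℝ}
    {z : ↥Ω → Set ↥Z} (hz : z ∈ NnaNE Ω Z (HΔ t₀ ϑ τ) α) : Feasible t₀ ϑ Ω Z α τ := by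
  obtain ⟨⟨hna, hsub⟩, hne⟩ := hz
  exact ⟨fun _ => z, fun _ => hsub, fun ωs hωs =>
    ⟨fun _ => hne _, fun i j hij => hna _ ⟨i, rfl⟩ _ _ (hωs i j hij)⟩⟩

theorem stmt3_general {X Y : Type*} (t₀ ϑ : ℝ)
    (Ω : Set (↥(Set.Icc t₀ ϑ) → Y)) (Z : Set (↥(Set.Icc t₀ ϑ) → X))
    (α : ↥Ω → Set ↥Z)
    (n : ℕ) (hn : 1 ≤ n) (τ : Fin (n + 1) → ℝ) (hτ : StrictMono τ)
    (hτn : τ (Fin.last n) = ϑ) :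
    Feasible t₀ ϑ Ω Z α τ ↔ (NnaNE Ω Z (HΔ t₀ ϑ τ) α).Nonempty := by
  refine ⟨?_, fun ⟨z, hz⟩ => feasible_of_mem_nnaNE hz⟩
  rintro ⟨φ, hφα, hφ⟩
  obtain ⟨m, rfl⟩ : ∃ m, n = m + 1 := ⟨n - 1, by omega⟩
  have hna := nonAnt_last_of_consecutive (hset_monotone t₀ ϑ hτ.monotone)
    (hset_last_eq_univ hτn) (fun ωs hωs => (hφ ωs hωs).2)
  refine ⟨φ (Fin.last m), ⟨?_, hφα _⟩, fun ω => (hφ (fun _ => ω) fun _ _ _ => rfl).1 _⟩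
  rintro _ ⟨i, rfl⟩
  exact hna i

/-- For any multifunction `α` and any partition
`Δ = {t₀ = τ 0 < τ 1 < ⋯ < τ n = ϑ}` of `T = [t₀, ϑ]`, the conditions `(α, Δ)` are feasible
iff `N°_{ℋ_Δ}(α) ≠ ∅`. -/
theorem stmt3 {X Y : Type*} [Nonempty X] [Nonempty Y] (t₀ ϑ : ℝ)
    (Ω : Set (↥(Set.Icc t₀ ϑ) → Y)) (Z : Set (↥(Set.Icc t₀ ϑ) → X))
    (hΩ : Ω.Nonempty) (hZ : Z.Nonempty)
    (α : ↥Ω → Set ↥Z)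
    (n : ℕ) (hn : 1 ≤ n) (τ : Fin (n + 1) → ℝ) (hτ : StrictMono τ)
    (hτ0 : τ 0 = t₀) (hτn : τ (Fin.last n) = ϑ) :
    Feasible t₀ ϑ Ω Z α τ ↔ (NnaNE Ω Z (HΔ t₀ ϑ τ) α).Nonempty :=
  stmt3_general t₀ ϑ Ω Z α n hn τ hτ hτn
end

section
/- Let A ⊆ T be nonempty. Then the image of the operator Γ_A (over all multifunctions α) equals the set of all A-non-anticipative multifunctions, and this set also equals the set of fixed points of Γ_A, i.e., the set of multifunctions β with Γ_A(β) = β. -/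
open Set

section Gamma

variable {T X Y : Type*} (Ω : Set (T → Y)) (Z : Set (T → X)) (A : Set T)

/-- The intersection lies in `α(ω)|_A` because `ω` belongs to its own class. -/
lemma resSet_gamma (α : ↥Ω → Set ↥Z) (ω : ↥Ω) :
    resSet A (Gamma Ω Z A α ω) =
      ⋂ ω' ∈ {η : ↥Ω | A.restrict (η : T → Y) = A.restrict (ω : T → Y)}, resSet A (α ω') := by
  ext g
  constructor
  · rintro ⟨h, ⟨-, hI⟩, rfl⟩
    exact hI
  · intro hg
    obtain ⟨h, hh, rfl⟩ := mem_iInter₂.mp hg ω rfl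
    exact ⟨h, ⟨hh, hg⟩, rfl⟩

lemma nonAnt_gamma (α : ↥Ω → Set ↥Z) : NonAnt Ω Z A (Gamma Ω Z A α) := by
  intro ω ω' hωω'
  simp only [resSet_gamma, hωω']

lemma gamma_eq_self_of_nonAnt {β : ↥Ω → Set ↥Z} (hβ : NonAnt Ω Z A β) :
    Gamma Ω Z A β = β := by
  funext ω
  refine (sep_subset _ _).antisymm fun h hh => ⟨hh, mem_iInter₂.mpr fun ω' hω' => ?_⟩
  rw [hβ ω' ω hω']
  exact mem_image_of_mem _ hh

end Gamma

theorem stmt4_general {T X Y : Type*}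
    (Ω : Set (T → Y)) (Z : Set (T → X))
    (A : Set T) :
    Set.range (Gamma Ω Z A) = {z : ↥Ω → Set ↥Z | NonAnt Ω Z A z} ∧
      {z : ↥Ω → Set ↥Z | NonAnt Ω Z A z} = {β : ↥Ω → Set ↥Z | Gamma Ω Z A β = β} := by
  have range_sub : Set.range (Gamma Ω Z A) ⊆ {z | NonAnt Ω Z A z} :=
    range_subset_iff.mpr (nonAnt_gamma Ω Z A)
  have nonAnt_sub : {z | NonAnt Ω Z A z} ⊆ {β | Gamma Ω Z A β = β} :=
    fun _ hβ => gamma_eq_self_of_nonAnt Ω Z A hβ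
  have fixed_sub : {β | Gamma Ω Z A β = β} ⊆ Set.range (Gamma Ω Z A) :=
    fun β hβ => ⟨β, hβ⟩
  exact ⟨range_sub.antisymm (fixed_sub.trans' nonAnt_sub),
    nonAnt_sub.antisymm (range_sub.trans' fixed_sub)⟩

/-- The image of `Γ_A` equals the set of all `A`-non-anticipative
multifunctions, which also equals the set of fixed points of `Γ_A`. -/
theorem stmt4 {T X Y : Type*} [Nonempty T] [Nonempty X] [Nonempty Y]
    (Ω : Set (T → Y)) (Z : Set (T → X)) (hΩ : Ω.Nonempty) (hZ : Z.Nonempty)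
    (A : Set T) (hA : A.Nonempty) :
    Set.range (Gamma Ω Z A) = {z : ↥Ω → Set ↥Z | NonAnt Ω Z A z} ∧
      {z : ↥Ω → Set ↥Z | NonAnt Ω Z A z} = {β : ↥Ω → Set ↥Z | Gamma Ω Z A β = β} :=
  stmt4_general Ω Z A
end

section
/- Let A ⊆ T be nonempty and α a multifunction. Then Γ_A(α) is the ⊑-greatest A-non-anticipative multiselector of α: Γ_A(α) ⊑ α, Γ_A(α) is A-non-anticipative, and every A-non-anticipative multifunction β with β ⊑ α satisfies β ⊑ Γ_A(α). -/
open Set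

section Gamma

variable {T X Y : Type*} {Ω : Set (T → Y)} {Z : Set (T → X)} {A : Set T} {α : ↥Ω → Set ↥Z}

theorem mem_Gamma {ω : ↥Ω} {h : ↥Z} :
    h ∈ Gamma Ω Z A α ω ↔ h ∈ α ω ∧
      ∀ η : ↥Ω, A.restrict (η : T → Y) = A.restrict (ω : T → Y) →
        A.restrict (h : T → X) ∈ resSet A (α η) := by
  simp only [Gamma, mem_ofPred_eq, mem_iInter₂]

theorem Gamma_subset (ω : ↥Ω) : Gamma Ω Z A α ω ⊆ α ω := fun _ hh => hh.1

/-- The extra condition defining `Γ_A(α)(ω)` depends only on `h|_A` and `ω|_A`, so lifting `h|_A`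
into `α(ω')` lands in `Γ_A(α)(ω')`. -/
theorem resSet_Gamma_subset {ω ω' : ↥Ω}
    (hω : A.restrict (ω : T → Y) = A.restrict (ω' : T → Y)) :
    resSet A (Gamma Ω Z A α ω) ⊆ resSet A (Gamma Ω Z A α ω') := by
  rintro _ ⟨h, hh, rfl⟩
  obtain ⟨-, hfibre⟩ := mem_Gamma.mp hh
  obtain ⟨h', hh', hrestr⟩ := hfibre ω' hω.symm
  beta_reduce at hrestr
  refine ⟨h', mem_Gamma.mpr ⟨hh', fun η hη => ?_⟩, hrestr⟩
  rw [hrestr]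
  exact hfibre η (hη.trans hω.symm)

theorem nonAnt_Gamma : NonAnt Ω Z A (Gamma Ω Z A α) := fun _ _ hω =>
  (resSet_Gamma_subset hω).antisymm (resSet_Gamma_subset hω.symm)

theorem subset_Gamma_of_nonAnt {β : ↥Ω → Set ↥Z} (hβ : NonAnt Ω Z A β)
    (hβα : ∀ ω, β ω ⊆ α ω) (ω : ↥Ω) : β ω ⊆ Gamma Ω Z A α ω := by
  intro h hh
  refine mem_Gamma.mpr ⟨hβα ω hh, fun η hη => ?_⟩
  have hmem : A.restrict (h : T → X) ∈ resSet A (β η) := hβ ω η hη.symm ▸ ⟨h, hh, rfl⟩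
  exact image_mono (hβα η) hmem

end Gamma

theorem stmt5_general {T X Y : Type*}
    (Ω : Set (T → Y)) (Z : Set (T → X))
    (A : Set T) (α : ↥Ω → Set ↥Z) :
    (∀ ω, Gamma Ω Z A α ω ⊆ α ω) ∧ NonAnt Ω Z A (Gamma Ω Z A α) ∧
      ∀ β : ↥Ω → Set ↥Z, NonAnt Ω Z A β → (∀ ω, β ω ⊆ α ω) →
        ∀ ω, β ω ⊆ Gamma Ω Z A α ω :=
  ⟨Gamma_subset, nonAnt_Gamma, fun _ hβ hβα => subset_Gamma_of_nonAnt hβ hβα⟩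

/-- `Γ_A(α)` is the `⊑`-greatest `A`-non-anticipative multiselector of `α`. -/
theorem stmt5 {T X Y : Type*} [Nonempty T] [Nonempty X] [Nonempty Y]
    (Ω : Set (T → Y)) (Z : Set (T → X)) (hΩ : Ω.Nonempty) (hZ : Z.Nonempty)
    (A : Set T) (hA : A.Nonempty) (α : ↥Ω → Set ↥Z) :
    (∀ ω, Gamma Ω Z A α ω ⊆ α ω) ∧ NonAnt Ω Z A (Gamma Ω Z A α) ∧
      ∀ β : ↥Ω → Set ↥Z, NonAnt Ω Z A β → (∀ ω, β ω ⊆ α ω) →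
        ∀ ω, β ω ⊆ Gamma Ω Z A α ω :=
  stmt5_general Ω Z A α
end

section
/- Let α be a multifunction and ℋ a nonempty family of nonempty subsets of T. If there exists ω ∈ Ω with ⋂_{A ∈ ℋ} Γ_A(α)(ω) = ∅, then N°_ℋ(α) = ∅, and consequently N°_{ℋ′}(α) = ∅ for every family ℋ′ of nonempty subsets of T with ℋ ⊆ ℋ′. -/
open Set

/-!
An `A`-non-anticipative selection `z ⊑ α` is automatically contained in `Γ_A(α)`: for `h ∈ z(ω)`
and `ω'` agreeing with `ω` on `A`, non-anticipativity gives `h|_A ∈ z(ω')|_A ⊆ α(ω')|_A`.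
Hence every `z ∈ N°_ℋ(α)` has `∅ ≠ z(ω) ⊆ ⋂_{A ∈ ℋ} Γ_A(α)(ω)` for all `ω`, and enlarging `ℋ`
only shrinks `N°_ℋ(α)`.
-/

section

variable {T X Y : Type*} {Ω : Set (T → Y)} {Z : Set (T → X)}

theorem NonAnt.subset_gamma {A : Set T} {z α : ↥Ω → Set ↥Z} (hz : NonAnt Ω Z A z)
    (hzα : ∀ ω, z ω ⊆ α ω) (ω : ↥Ω) : z ω ⊆ Gamma Ω Z A α ω := by
  intro h hh
  refine ⟨hzα ω hh, mem_iInter₂.2 fun ω' hω' => ?_⟩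
  have hres : A.restrict (h : T → X) ∈ resSet A (z ω') :=
    hz ω ω' hω'.symm ▸ mem_image_of_mem _ hh
  exact image_mono (hzα ω') hres

theorem subset_iInter_gamma_of_mem_nna {ℋ : Set (Set T)} {z α : ↥Ω → Set ↥Z}
    (hz : z ∈ Nna Ω Z ℋ α) (ω : ↥Ω) : z ω ⊆ ⋂ A ∈ ℋ, Gamma Ω Z A α ω :=
  subset_iInter₂ fun A hA => (hz.1 A hA).subset_gamma hz.2 ω

theorem nnaNE_eq_empty_of_iInter_gamma_eq_empty {ℋ : Set (Set T)} {α : ↥Ω → Set ↥Z} {ω : ↥Ω}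
    (hω : ⋂ A ∈ ℋ, Gamma Ω Z A α ω = ∅) : NnaNE Ω Z ℋ α = ∅ :=
  eq_empty_of_forall_notMem fun _ hz =>
    (hz.2 ω).ne_empty (subset_eq_empty (subset_iInter_gamma_of_mem_nna hz.1 ω) hω)

theorem nnaNE_anti {ℋ ℋ' : Set (Set T)} (hℋ : ℋ ⊆ ℋ') (α : ↥Ω → Set ↥Z) :
    NnaNE Ω Z ℋ' α ⊆ NnaNE Ω Z ℋ α :=
  fun _ hz => ⟨⟨fun A hA => hz.1.1 A (hℋ hA), hz.1.2⟩, hz.2⟩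

end

theorem stmt8_general {T X Y : Type*}
    (Ω : Set (T → Y)) (Z : Set (T → X))
    (ℋ : Set (Set T))
    (α : ↥Ω → Set ↥Z)
    (h : ∃ ω : ↥Ω, ⋂ A ∈ ℋ, Gamma Ω Z A α ω = ∅) :
    NnaNE Ω Z ℋ α = ∅ ∧
      ∀ ℋ' : Set (Set T), (∀ A ∈ ℋ', A.Nonempty) → ℋ ⊆ ℋ' → NnaNE Ω Z ℋ' α = ∅ := by
  obtain ⟨ω, hω⟩ := h
  have hempty := nnaNE_eq_empty_of_iInter_gamma_eq_empty hω
  exact ⟨hempty, fun ℋ' _ hℋ' => subset_eq_empty (nnaNE_anti hℋ' α) hempty⟩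

/-- If `⋂_{A ∈ ℋ} Γ_A(α)(ω) = ∅` for some `ω`, then `N°_ℋ(α) = ∅`, and
consequently `N°_ℋ'(α) = ∅` for every family `ℋ'` of nonempty subsets with `ℋ ⊆ ℋ'`. -/
theorem stmt8 {T X Y : Type*} [Nonempty T] [Nonempty X] [Nonempty Y]
    (Ω : Set (T → Y)) (Z : Set (T → X)) (hΩ : Ω.Nonempty) (hZ : Z.Nonempty)
    (ℋ : Set (Set T)) (hℋ : ℋ.Nonempty) (hℋmem : ∀ A ∈ ℋ, A.Nonempty)
    (α : ↥Ω → Set ↥Z)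
    (h : ∃ ω : ↥Ω, ⋂ A ∈ ℋ, Gamma Ω Z A α ω = ∅) :
    NnaNE Ω Z ℋ α = ∅ ∧
      ∀ ℋ' : Set (Set T), (∀ A ∈ ℋ', A.Nonempty) → ℋ ⊆ ℋ' → NnaNE Ω Z ℋ' α = ∅ :=
  stmt8_general Ω Z ℋ α h
end

section
/- Let H₁, H₂ be nonempty subsets of T with H₁ ⊆ H₂, and let α be an H₂-non-anticipative multifunction. Then Γ_{H₁}(α) is also H₂-non-anticipative. -/
open Set

theorem Gamma_mem_iff {T X Y : Type*} {Ω : Set (T → Y)} {Z : Set (T → X)} {A : Set T}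
    {α : ↥Ω → Set ↥Z} {ω : ↥Ω} {h : ↥Z} :
    h ∈ Gamma Ω Z A α ω ↔ h ∈ α ω ∧
      ∀ ω' : ↥Ω, A.domRestrict (ω' : T → Y) = A.domRestrict (ω : T → Y) →
        A.domRestrict (h : T → X) ∈ resSet A (α ω') := by
  simp only [Gamma, mem_ofPred_eq, mem_iInter]
  rfl

theorem domRestrict_eq_domRestrict_of_subset {T β : Type*} {A B : Set T} (hAB : A ⊆ B)
    {f g : T → β} (h : B.domRestrict f = B.domRestrict g) : A.domRestrict f = A.domRestrict g :=
  domRestrict_eq_domRestrict_iff.2 ((domRestrict_eq_domRestrict_iff.1 h).mono hAB)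

theorem NonAnt.of_resSet_subset {T X Y : Type*} {Ω : Set (T → Y)} {Z : Set (T → X)} {A : Set T}
    {z : ↥Ω → Set ↥Z}
    (hz : ∀ ω ω' : ↥Ω, A.domRestrict (ω : T → Y) = A.domRestrict (ω' : T → Y) →
      resSet A (z ω) ⊆ resSet A (z ω')) :
    NonAnt Ω Z A z :=
  fun ω ω' hωω' => (hz ω ω' hωω').antisymm (hz ω' ω hωω'.symm)

/-- Each `h ∈ Γ_{H₁}(α)(ω)` has an `H₂`-twin `h' ∈ α(ω')` by `H₂`-non-anticipativity; since
`H₁ ⊆ H₂`, the twin satisfies the same `H₁`-condition as `h`, which only involves `ω|_{H₁}`. -/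
theorem resSet_Gamma_subset_s10 {T X Y : Type*} {Ω : Set (T → Y)} {Z : Set (T → X)} {H₁ H₂ : Set T}
    (h12 : H₁ ⊆ H₂) {α : ↥Ω → Set ↥Z} (hα : NonAnt Ω Z H₂ α) {ω ω' : ↥Ω}
    (hωω' : H₂.domRestrict (ω : T → Y) = H₂.domRestrict (ω' : T → Y)) :
    resSet H₂ (Gamma Ω Z H₁ α ω) ⊆ resSet H₂ (Gamma Ω Z H₁ α ω') := by
  rintro _ ⟨h, hΓ, rfl⟩
  obtain ⟨hα_mem, hH₁⟩ := Gamma_mem_iff.1 hΓ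
  obtain ⟨h', hα'_mem, hh'⟩ : H₂.domRestrict (h : T → X) ∈ resSet H₂ (α ω') :=
    hα ω ω' hωω' ▸ mem_image_of_mem _ hα_mem
  have hh'₁ := domRestrict_eq_domRestrict_of_subset h12 hh'
  have hωω'₁ := domRestrict_eq_domRestrict_of_subset h12 hωω'
  refine ⟨h', Gamma_mem_iff.2 ⟨hα'_mem, fun η hη => ?_⟩, hh'⟩
  rw [hh'₁]
  exact hH₁ η (hη.trans hωω'₁.symm)

theorem stmt10_general {T X Y : Type*}
    (Ω : Set (T → Y)) (Z : Set (T → X))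
    (H₁ H₂ : Set T) (h12 : H₁ ⊆ H₂)
    (α : ↥Ω → Set ↥Z) (hα : NonAnt Ω Z H₂ α) :
    NonAnt Ω Z H₂ (Gamma Ω Z H₁ α) :=
  NonAnt.of_resSet_subset fun _ _ => resSet_Gamma_subset_s10 h12 hα

/-- If `H₁ ⊆ H₂` are nonempty and `α` is `H₂`-non-anticipative, then `Γ_{H₁}(α)`
is also `H₂`-non-anticipative. -/
theorem stmt10 {T X Y : Type*} [Nonempty T] [Nonempty X] [Nonempty Y]
    (Ω : Set (T → Y)) (Z : Set (T → X)) (hΩ : Ω.Nonempty) (hZ : Z.Nonempty)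
    (H₁ H₂ : Set T) (hH₁ : H₁.Nonempty) (hH₂ : H₂.Nonempty) (h12 : H₁ ⊆ H₂)
    (α : ↥Ω → Set ↥Z) (hα : NonAnt Ω Z H₂ α) :
    NonAnt Ω Z H₂ (Gamma Ω Z H₁ α) :=
  stmt10_general Ω Z H₁ H₂ h12 α hα
end

section
/- Let ℋ be a nonempty family of nonempty subsets of T. Then the set of joint fixed points ⋂_{A ∈ ℋ} {β : Γ_A(β) = β} equals the set of all ℋ-non-anticipative multifunctions. -/
open Set

section Gamma

variable {T X Y : Type*} {Ω : Set (T → Y)} {Z : Set (T → X)} {A : Set T}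

theorem gamma_subset (α : ↥Ω → Set ↥Z) (ω : ↥Ω) : Gamma Ω Z A α ω ⊆ α ω :=
  fun _ hh => hh.1

theorem gamma_eq_self_iff_resSet_subset {α : ↥Ω → Set ↥Z} :
    Gamma Ω Z A α = α ↔ ∀ ω ω' : ↥Ω, A.restrict (ω : T → Y) = A.restrict (ω' : T → Y) →
      resSet A (α ω) ⊆ resSet A (α ω') := by
  constructor
  · rintro hfix ω ω' hres _ ⟨h, hh, rfl⟩
    rw [← hfix] at hh
    exact mem_iInter₂.mp hh.2 ω' hres.symm
  · intro hsub
    funext ω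
    refine (gamma_subset α ω).antisymm fun h hh => ⟨hh, mem_iInter₂.mpr fun η hη => ?_⟩
    exact hsub ω η hη.symm ⟨h, hh, rfl⟩

theorem nonAnt_iff_resSet_subset {z : ↥Ω → Set ↥Z} :
    NonAnt Ω Z A z ↔ ∀ ω ω' : ↥Ω, A.restrict (ω : T → Y) = A.restrict (ω' : T → Y) →
      resSet A (z ω) ⊆ resSet A (z ω') :=
  ⟨fun hna ω ω' hres => (hna ω ω' hres).subset,
    fun hsub ω ω' hres => (hsub ω ω' hres).antisymm (hsub ω' ω hres.symm)⟩

theorem gamma_eq_self_iff_nonAnt {α : ↥Ω → Set ↥Z} :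
    Gamma Ω Z A α = α ↔ NonAnt Ω Z A α :=
  gamma_eq_self_iff_resSet_subset.trans nonAnt_iff_resSet_subset.symm

end Gamma

theorem stmt13_general {T X Y : Type*}
    (Ω : Set (T → Y)) (Z : Set (T → X))
    (ℋ : Set (Set T)) :
    (⋂ A ∈ ℋ, {β : ↥Ω → Set ↥Z | Gamma Ω Z A β = β}) =
      {z : ↥Ω → Set ↥Z | ∀ A ∈ ℋ, NonAnt Ω Z A z} := by
  ext β
  simp only [mem_iInter, mem_ofPred_eq, gamma_eq_self_iff_nonAnt]

/-- The set of joint fixed points of the family `{Γ_A : A ∈ ℋ}` equals the set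
of all `ℋ`-non-anticipative multifunctions. -/
theorem stmt13 {T X Y : Type*} [Nonempty T] [Nonempty X] [Nonempty Y]
    (Ω : Set (T → Y)) (Z : Set (T → X)) (hΩ : Ω.Nonempty) (hZ : Z.Nonempty)
    (ℋ : Set (Set T)) (hℋ : ℋ.Nonempty) (hℋmem : ∀ A ∈ ℋ, A.Nonempty) :
    (⋂ A ∈ ℋ, {β : ↥Ω → Set ↥Z | Gamma Ω Z A β = β}) =
      {z : ↥Ω → Set ↥Z | ∀ A ∈ ℋ, NonAnt Ω Z A z} :=
  stmt13_general Ω Z ℋ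
end

section
/- For the concrete setting of Example 3 (T = [0,2], Ω = {v_j : j ∈ ℕ, j ≥ 1}, Z = {u_i : i ∈ ℕ, i ≥ 1}, α(v_j) = {u_i : i ≥ j}, 𝒯 = {[0, τ] : τ ∈ [0,2]}), the multifunction α has no 𝒯-non-anticipative multiselector with nonempty values: N°_𝒯(α) = ∅. -/
open Set

/-- Example 3: the control `u_i` (`i ≥ 1`) on `T = [0,2]`. -/
noncomputable def uex (i : ℕ) (t : ↥(Set.Icc (0:ℝ) 2)) : ℝ :=
  if (t : ℝ) ≤ 1 then 0 else 1 - 1 / (i : ℝ)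

/-- Example 3: the disturbance `v_j` (`j ≥ 1`) on `T = [0,2]`. -/
noncomputable def vex (j : ℕ) (t : ↥(Set.Icc (0:ℝ) 2)) : ℝ :=
  if (t : ℝ) ≤ 1 + 1 / (j : ℝ) then 0 else 1

/-- Example 3: the set of disturbances `Ω = {v_j : j ≥ 1}`. -/
def Ωex : Set (↥(Set.Icc (0:ℝ) 2) → ℝ) := {f | ∃ j : ℕ, 1 ≤ j ∧ f = vex j}

/-- Example 3: the set of trajectories `Z = {u_i : i ≥ 1}`. -/
def Zex : Set (↥(Set.Icc (0:ℝ) 2) → ℝ) := {f | ∃ i : ℕ, 1 ≤ i ∧ f = uex i}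

/-- Example 3: the multifunction of optimal answers, `α(v_j) = {u_i : i ≥ j}`. -/
def αex : ↥Ωex → Set ↥Zex := fun ω =>
  {h | ∃ j i : ℕ, 1 ≤ j ∧ j ≤ i ∧ (ω : ↥(Set.Icc (0:ℝ) 2) → ℝ) = vex j ∧
    (h : ↥(Set.Icc (0:ℝ) 2) → ℝ) = uex i}

/-!
Pick `u_i ∈ z(v_1)`. The disturbances `v_1` and `v_{i+1}` coincide on `[0, 1 + 1/(i+1)]`, so
non-anticipativity on that interval forces some `u_{i'} ∈ z(v_{i+1}) ⊆ α(v_{i+1})` to agree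
with `u_i` at the time `1 + 1/(i+1) > 1`, whence `i' = i`; but every element of `α(v_{i+1})`
has index `i' ≥ i + 1`.
-/

lemma NonAnt.exists_mem_restrict_eq {T X Y : Type*} {Ω : Set (T → Y)} {Z : Set (T → X)}
    {A : Set T} {z : ↥Ω → Set ↥Z} (hz : NonAnt Ω Z A z) {ω ω' : ↥Ω}
    (hωω' : A.domRestrict (ω : T → Y) = A.domRestrict (ω' : T → Y)) {h : ↥Z}
    (hh : h ∈ z ω) :
    ∃ g ∈ z ω', A.domRestrict (g : T → X) = A.domRestrict (h : T → X) :=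
  show _ ∈ resSet A (z ω') from hz ω ω' hωω' ▸ mem_image_of_mem _ hh

/-- The jump time of `v_j` (equal to `1` for `j = 0`, since `1 / 0 = 0`). -/
noncomputable def vexJump (j : ℕ) : ↥(Icc (0:ℝ) 2) :=
  ⟨1 + 1 / (j : ℝ), by
    have := Nat.cast_inv_le_one (α := ℝ) j
    constructor <;> [positivity; (rw [one_div]; linarith)]⟩

lemma vex_eq_zero_of_le_vexJump {j : ℕ} {t : ↥(Icc (0:ℝ) 2)} (ht : (t : ℝ) ≤ vexJump j) :
    vex j t = 0 :=
  if_pos ht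

lemma vex_eq_one_of_vexJump_lt {j : ℕ} {t : ↥(Icc (0:ℝ) 2)} (ht : (vexJump j : ℝ) < t) :
    vex j t = 1 :=
  if_neg ht.not_ge

lemma vexJump_le_of_vex_eq {a b : ℕ} (hab : vex a = vex b) :
    (vexJump a : ℝ) ≤ vexJump b := by
  by_contra! hlt
  have := congrFun hab (vexJump a)
  rw [vex_eq_zero_of_le_vexJump le_rfl, vex_eq_one_of_vexJump_lt hlt] at this
  exact zero_ne_one this

lemma vex_injective : Function.Injective vex := fun a b hab => by
  have hjump : (vexJump a : ℝ) = vexJump b :=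
    (vexJump_le_of_vex_eq hab).antisymm (vexJump_le_of_vex_eq hab.symm)
  simpa [vexJump] using hjump

lemma vexJump_le_vexJump {a b : ℕ} (ha : 1 ≤ a) (hab : a ≤ b) :
    (vexJump b : ℝ) ≤ vexJump a := by
  have : 1 / (b : ℝ) ≤ 1 / a :=
    one_div_le_one_div_of_le (by exact_mod_cast ha) (by exact_mod_cast hab)
  simpa [vexJump] using this

lemma restrict_vex_eq {a b : ℕ} (ha : 1 ≤ a) (hab : a ≤ b) :
    {t : ↥(Icc (0:ℝ) 2) | (t : ℝ) ≤ vexJump b}.domRestrict (vex a) =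
      {t : ↥(Icc (0:ℝ) 2) | (t : ℝ) ≤ vexJump b}.domRestrict (vex b) := by
  funext ⟨t, (ht : (t : ℝ) ≤ vexJump b)⟩
  simp only [domRestrict_apply]
  rw [vex_eq_zero_of_le_vexJump ht,
    vex_eq_zero_of_le_vexJump (ht.trans (vexJump_le_vexJump ha hab))]

lemma eq_of_uex_apply_eq {i i' : ℕ} {t : ↥(Icc (0:ℝ) 2)} (ht : 1 < (t : ℝ))
    (h : uex i t = uex i' t) : i = i' := by
  simpa [uex, ht.not_ge] using h

lemma one_lt_vexJump {j : ℕ} (hj : 1 ≤ j) : 1 < (vexJump j : ℝ) := by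
  have : (0 : ℝ) < 1 / j := Nat.one_div_cast_pos (by omega)
  simpa [vexJump] using this

lemma exists_eq_uex_of_mem_αex {ω : ↥Ωex} {h : ↥Zex} {j : ℕ}
    (hω : (ω : ↥(Icc (0:ℝ) 2) → ℝ) = vex j) (hh : h ∈ αex ω) :
    ∃ i, j ≤ i ∧ (h : ↥(Icc (0:ℝ) 2) → ℝ) = uex i := by
  obtain ⟨j', i, -, hj'i, hω', hhi⟩ := hh
  obtain rfl := vex_injective (hω.symm.trans hω')
  exact ⟨i, hj'i, hhi⟩

/-- In Example 3, with `𝒯 = {[0,τ] : τ ∈ [0,2]}`, the multifunction `α` has no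
`𝒯`-non-anticipative multiselector with nonempty values: `N°_𝒯(α) = ∅`. -/
theorem stmt15 :
    NnaNE Ωex Zex
      {S : Set ↥(Set.Icc (0:ℝ) 2) | ∃ τ : ↥(Set.Icc (0:ℝ) 2),
        S = {t : ↥(Set.Icc (0:ℝ) 2) | (t : ℝ) ≤ (τ : ℝ)}} αex = ∅ := by
  refine eq_empty_of_forall_notMem fun z ⟨⟨hna, hsub⟩, hne⟩ => ?_
  obtain ⟨h, hh⟩ := hne ⟨vex 1, 1, le_rfl, rfl⟩
  obtain ⟨i, -, hhi⟩ := exists_eq_uex_of_mem_αex rfl (hsub _ hh)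
  obtain ⟨g, hg, hgh⟩ := (hna _ ⟨vexJump (i + 1), rfl⟩).exists_mem_restrict_eq
    (ω' := ⟨vex (i + 1), i + 1, by omega, rfl⟩) (restrict_vex_eq le_rfl (by omega)) hh
  obtain ⟨i', hi', hgi'⟩ := exists_eq_uex_of_mem_αex rfl (hsub _ hg)
  have hjump := congrFun hgh ⟨vexJump (i + 1), (le_rfl : (vexJump (i + 1) : ℝ) ≤ _)⟩
  simp only [domRestrict_apply, hgi', hhi] at hjump
  have := eq_of_uex_apply_eq (one_lt_vexJump (by omega)) hjump
  omega
end

section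
/- For the concrete setting of Example 3 (T = [0,2], Ω = {v_j : j ∈ ℕ, j ≥ 1}, Z = {u_i : i ∈ ℕ, i ≥ 1}, α(v_j) = {u_i : i ≥ j}), for every partition Δ = {0 = τ₀ < τ₁ < ⋯ < τ_n = 2} of [0,2] one has N°_{ℋ_Δ}(α) ≠ ∅, i.e., α has an ℋ_Δ-non-anticipative multiselector with nonempty values (equivalently, the conditions (α, Δ) are feasible for every partition Δ). -/
open Set

/-!
Every `H ∈ ℋ_Δ` is an initial segment `{t ≤ c}`. If `c ≤ 1`, all `u_i` agree on it. If `c > 1`,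
the restriction of `v_j` to `{t ≤ c}` determines `j` as soon as `1 + 1/j < c`, and carries no
information otherwise. Since there are only finitely many cutoffs, one `M` with `1 + 1/M < c` for
every cutoff `c > 1` exists, and `z(v_j) = {u_{max j M}}` is then non-anticipative: on every
segment it either sees `j` exactly or answers `u_M`.
-/

lemma exists_one_add_one_div_lt {ι : Type*} [Finite ι] (c : ι → ℝ) :
    ∃ M : ℕ, 0 < M ∧ ∀ i, 1 < c i → 1 + 1 / (M : ℝ) < c i := by
  have hN : ∀ i, ∃ N : ℕ, 1 < c i → 1 / ((N : ℝ) + 1) < c i - 1 := by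
    intro i
    by_cases hi : 1 < c i
    · exact (exists_nat_one_div_lt (sub_pos.2 hi)).imp fun _ h _ => h
    · exact ⟨0, fun h => absurd h hi⟩
  choose N hN using hN
  obtain ⟨K, hK⟩ := Finite.exists_le N
  refine ⟨K + 1, K.succ_pos, fun i hi => ?_⟩
  have hle : 1 / ((K + 1 : ℕ) : ℝ) ≤ 1 / ((N i : ℝ) + 1) := by
    push_cast
    gcongr
    exact_mod_cast hK i
  linarith [hN i hi]

def initialSegment (c : ℝ) : Set (Icc (0 : ℝ) 2) := {t | (t : ℝ) ≤ c}

lemma uex_mem_Zex {i : ℕ} (hi : 1 ≤ i) : uex i ∈ Zex := ⟨i, hi, rfl⟩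

lemma domRestrict_uex_eq_of_le_one {c : ℝ} (hc : c ≤ 1) (i i' : ℕ) :
    (initialSegment c).domRestrict (uex i) =
      (initialSegment c).domRestrict (uex i') := by
  funext t
  have ht : ((t : Icc (0 : ℝ) 2) : ℝ) ≤ 1 := t.2.trans hc
  simp only [domRestrict_apply, uex, if_pos ht]

lemma eq_of_domRestrict_vex_eq {c : ℝ} {j j' : ℕ} (hj : 1 ≤ j) (hj' : 1 ≤ j')
    (hjc : 1 + 1 / (j : ℝ) < c)
    (heq : (initialSegment c).domRestrict (vex j) =
      (initialSegment c).domRestrict (vex j')) : j = j' := by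
  have hjR : (1 : ℝ) ≤ j := by exact_mod_cast hj
  have hj'R : (1 : ℝ) ≤ j' := by exact_mod_cast hj'
  have hj_inv : 0 < 1 / (j : ℝ) ∧ 1 / (j : ℝ) ≤ 1 :=
    ⟨by positivity, (div_le_one (by linarith)).2 hjR⟩
  have hj'_inv : 0 < 1 / (j' : ℝ) ∧ 1 / (j' : ℝ) ≤ 1 :=
    ⟨by positivity, (div_le_one (by linarith)).2 hj'R⟩
  have heq_at : ∀ s : ℝ, 0 ≤ s → s ≤ 2 → s ≤ c →
      (if s ≤ 1 + 1 / (j : ℝ) then (0 : ℝ) else 1) = if s ≤ 1 + 1 / (j' : ℝ) then 0 else 1 :=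
    fun s h0 h2 hc => congrFun heq ⟨⟨s, h0, h2⟩, hc⟩
  by_contra hne
  rcases Nat.lt_or_gt_of_ne hne with hlt | hlt
  · have hinv : 1 / (j' : ℝ) < 1 / j :=
      one_div_lt_one_div_of_lt (by linarith) (by exact_mod_cast hlt)
    have := heq_at (1 + 1 / j) (by linarith) (by linarith) hjc.le
    rw [if_pos le_rfl, if_neg (by linarith)] at this
    norm_num at this
  · have hinv : 1 / (j : ℝ) < 1 / j' :=
      one_div_lt_one_div_of_lt (by linarith) (by exact_mod_cast hlt)
    set s := min (1 + 1 / (j' : ℝ)) c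
    have hs : 1 + 1 / (j : ℝ) < s := lt_min (by linarith) hjc
    have := heq_at s (by linarith) ((min_le_left _ _).trans (by linarith)) (min_le_right _ _)
    rw [if_neg hs.not_ge, if_pos (min_le_left _ _)] at this
    norm_num at this

lemma le_of_one_add_one_div_lt {c : ℝ} {j M : ℕ} (hM : 0 < M)
    (hMc : 1 + 1 / (M : ℝ) < c) (hcj : c ≤ 1 + 1 / (j : ℝ)) : j ≤ M := by
  by_contra! hlt
  have : 1 / (j : ℝ) ≤ 1 / M :=
    one_div_le_one_div_of_le (by exact_mod_cast hM) (by exact_mod_cast hlt.le)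
  linarith

lemma domRestrict_uex_max_eq {c : ℝ} {M j j' : ℕ} (hM : 0 < M)
    (hMc : 1 < c → 1 + 1 / (M : ℝ) < c) (hj : 1 ≤ j) (hj' : 1 ≤ j')
    (hres : (initialSegment c).domRestrict (vex j) =
      (initialSegment c).domRestrict (vex j')) :
    (initialSegment c).domRestrict (uex (max j M)) =
      (initialSegment c).domRestrict (uex (max j' M)) := by
  rcases le_or_gt c 1 with hc | hc
  · exact domRestrict_uex_eq_of_le_one hc _ _
  by_cases hjc : 1 + 1 / (j : ℝ) < c
  · rw [eq_of_domRestrict_vex_eq hj hj' hjc hres]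
  by_cases hj'c : 1 + 1 / (j' : ℝ) < c
  · rw [eq_of_domRestrict_vex_eq hj' hj hj'c hres.symm]
  rw [max_eq_right (le_of_one_add_one_div_lt hM (hMc hc) (not_lt.1 hjc)),
    max_eq_right (le_of_one_add_one_div_lt hM (hMc hc) (not_lt.1 hj'c))]

def selectorEx (M : ℕ) : Ωex → Set Zex := fun ω =>
  {h | ∃ j : ℕ, 1 ≤ j ∧ (ω : Icc (0 : ℝ) 2 → ℝ) = vex j ∧
    (h : Icc (0 : ℝ) 2 → ℝ) = uex (max j M)}

lemma selectorEx_subset_αex (M : ℕ) (ω : Ωex) : selectorEx M ω ⊆ αex ω :=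
  fun _ ⟨j, hj, hωj, hhj⟩ => ⟨j, max j M, hj, le_max_left _ _, hωj, hhj⟩

lemma selectorEx_nonempty (M : ℕ) (ω : Ωex) : (selectorEx M ω).Nonempty := by
  obtain ⟨j, hj, hωj⟩ := ω.2
  exact ⟨⟨uex (max j M), uex_mem_Zex (hj.trans (le_max_left _ _))⟩, j, hj, hωj, rfl⟩

lemma nonAnt_selectorEx {c : ℝ} {M : ℕ} (hM : 0 < M) (hMc : 1 < c → 1 + 1 / (M : ℝ) < c) :
    NonAnt Ωex Zex (initialSegment c) (selectorEx M) := by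
  have hsub : ∀ ω ω' : Ωex,
      (initialSegment c).domRestrict (ω : Icc (0 : ℝ) 2 → ℝ) =
        (initialSegment c).domRestrict (ω' : Icc (0 : ℝ) 2 → ℝ) →
      resSet (initialSegment c) (selectorEx M ω) ⊆
        resSet (initialSegment c) (selectorEx M ω') := by
    rintro ω ω' hres _ ⟨h, ⟨j, hj, hωj, hhj⟩, rfl⟩
    obtain ⟨j', hj', hωj'⟩ := ω'.2
    refine ⟨⟨uex (max j' M), uex_mem_Zex (hj'.trans (le_max_left _ _))⟩, ⟨j', hj', hωj', rfl⟩, ?_⟩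
    rw [hωj, hωj'] at hres
    simp only [hhj]
    exact (domRestrict_uex_max_eq hM hMc hj hj' hres).symm
  exact fun ω ω' hres => (hsub ω ω' hres).antisymm (hsub ω' ω hres.symm)

theorem stmt16_general (n : ℕ) (τ : Fin (n + 1) → ℝ) :
    (NnaNE Ωex Zex (HΔ 0 2 τ) αex).Nonempty := by
  obtain ⟨M, hM, hMτ⟩ := exists_one_add_one_div_lt fun i : Fin n => τ i.succ
  refine ⟨selectorEx M, ⟨?_, selectorEx_subset_αex M⟩, selectorEx_nonempty M⟩
  rintro _ ⟨i, rfl⟩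
  exact nonAnt_selectorEx hM (hMτ i)

/-- In Example 3, for every partition `Δ = {0 = τ 0 < τ 1 < ⋯ < τ n = 2}` of
`[0,2]` one has `N°_{ℋ_Δ}(α) ≠ ∅`. -/
theorem stmt16 (n : ℕ) (hn : 1 ≤ n) (τ : Fin (n + 1) → ℝ) (hτ : StrictMono τ)
    (hτ0 : τ 0 = 0) (hτn : τ (Fin.last n) = 2) :
    (NnaNE Ωex Zex (HΔ 0 2 τ) αex).Nonempty :=
  stmt16_general n τ
end

section
/- The map A ↦ Γ_A(α) is in general not isotonic with respect to inclusion of A and the order ⊑: there exist nonempty sets T, X, Y, a nonempty set Ω of functions T → Y, a nonempty set Z of functions T → X, nonempty subsets H₁ ⊆ H₂ of T, and a multifunction α such that neither Γ_{H₁}(α) ⊑ Γ_{H₂}(α) nor Γ_{H₂}(α) ⊑ Γ_{H₁}(α). -/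
open Set

/-! Enlarging `A` makes the test defining `Γ_A(α)(ω)` finer (restrictions to `A` are compared
more precisely) but milder (fewer `ω'` agree with `ω` on `A`), and neither effect dominates.
Take `Ω = Z = Bool^{0,1,2}`, written as bit strings, `H₁ = {0} ⊆ H₂ = {0, 1}`, `ω = 000`, and
`α(ω') = {000}` if `ω'₁ = 1`, `α(001) = {010, 100}`, `α(000) = {000, 100}`. Then `000` passes the
coarse test at every `ω'` with `ω'₀ = 0` but fails the fine test at `001`, while `100` passes the
fine test at `000` and `001` but fails the coarse test at `010`. -/

theorem mem_Gamma_iff {T X Y : Type*} {Ω : Set (T → Y)} {Z : Set (T → X)} {A : Set T}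
    {α : Ω → Set Z} {ω : Ω} {h : Z} :
    h ∈ Gamma Ω Z A α ω ↔
      h ∈ α ω ∧ ∀ ω' : Ω, EqOn (ω' : T → Y) ω A → ∃ g ∈ α ω', EqOn (g : T → X) h A := by
  simp [Gamma, resSet, Set.restrict]

namespace GammaNotMonotone

abbrev H₁ : Set (Fin 3) := {0}

abbrev H₂ : Set (Fin 3) := {0, 1}

def α (ω : Fin 3 → Bool) : Finset (Fin 3 → Bool) :=
  if ω 1 then {![false, false, false]}
  else if ω 2 then {![false, true, false], ![true, false, false]}
  else {![false, false, false], ![true, false, false]}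

abbrev Γ (A : Set (Fin 3)) : ↥(univ : Set (Fin 3 → Bool)) → Set ↥(univ : Set (Fin 3 → Bool)) :=
  Gamma univ univ A (fun ω => Subtype.val ⁻¹' ↑(α ω))

def ω₀ : ↥(univ : Set (Fin 3 → Bool)) := ⟨![false, false, false], mem_univ _⟩

def x₀ : ↥(univ : Set (Fin 3 → Bool)) := ⟨![false, false, false], mem_univ _⟩

def x₁ : ↥(univ : Set (Fin 3 → Bool)) := ⟨![true, false, false], mem_univ _⟩

theorem x₀_mem_Γ_H₁ : x₀ ∈ Γ H₁ ω₀ := by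
  simp +decide [x₀, ω₀, mem_Gamma_iff, EqOn]

theorem x₀_notMem_Γ_H₂ : x₀ ∉ Γ H₂ ω₀ := by
  simp +decide [x₀, ω₀, mem_Gamma_iff, EqOn]

theorem x₁_mem_Γ_H₂ : x₁ ∈ Γ H₂ ω₀ := by
  simp +decide [x₁, ω₀, mem_Gamma_iff, EqOn]

theorem x₁_notMem_Γ_H₁ : x₁ ∉ Γ H₁ ω₀ := by
  simp +decide [x₁, ω₀, mem_Gamma_iff, EqOn]

end GammaNotMonotone

/-- The map `A ↦ Γ_A(α)` is in general not isotonic: there are nonempty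
`H₁ ⊆ H₂` and `α` with neither `Γ_{H₁}(α) ⊑ Γ_{H₂}(α)` nor `Γ_{H₂}(α) ⊑ Γ_{H₁}(α)`. -/
theorem stmt18 :
    ∃ (T X Y : Type) (_ : Nonempty T) (_ : Nonempty X) (_ : Nonempty Y)
      (Ω : Set (T → Y)) (Z : Set (T → X)) (_ : Ω.Nonempty) (_ : Z.Nonempty)
      (H₁ H₂ : Set T) (_ : H₁.Nonempty) (_ : H₂.Nonempty) (_ : H₁ ⊆ H₂)
      (α : ↥Ω → Set ↥Z),
      ¬ (∀ ω, Gamma Ω Z H₁ α ω ⊆ Gamma Ω Z H₂ α ω) ∧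
      ¬ (∀ ω, Gamma Ω Z H₂ α ω ⊆ Gamma Ω Z H₁ α ω) :=
  ⟨Fin 3, Bool, Bool, ⟨0⟩, ⟨false⟩, ⟨false⟩, univ, univ, univ_nonempty, univ_nonempty,
    GammaNotMonotone.H₁, GammaNotMonotone.H₂,
    singleton_nonempty 0, insert_nonempty 0 {1}, singleton_subset_iff.2 (mem_insert 0 {1}),
    fun ω => Subtype.val ⁻¹' ↑(GammaNotMonotone.α ω),
    fun hsub => GammaNotMonotone.x₀_notMem_Γ_H₂ (hsub _ GammaNotMonotone.x₀_mem_Γ_H₁),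
    fun hsub => GammaNotMonotone.x₁_notMem_Γ_H₁ (hsub _ GammaNotMonotone.x₁_mem_Γ_H₂)⟩
end
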